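/- arXiv:0909.2545 — 6 statements merged into one kernel-verified Lean document; each statement's English description precedes it below -/
import Mathlib

section
/- In the Yokonuma–Hecke algebra Y_{d,n}(u), for every negative even integer m = -2k one has g_i^m = 1 + α'_m e_{d,i} - α'_m e_{d,i} g_i with α'_m = u^{-1}(u^{-1}-1)∑_{l=0}^{k-1} u^{-2l}, and for m = -2k+1 (k ≥ 1) one has g_i^m = g_i - β'_m e_{d,i} + β'_m e_{d,i} g_i with β'_m = (u^{-1}-1)∑_{l=0}^{k-1} u^{-2l}. -/
/-! `e_{d,i}` is the average of the powers of `t_i t_{i+1}⁻¹`, an element of order dividing `d`,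
hence an idempotent. Using `e² = e` and `g_i g_i⁻¹ = 1`, multiplying `1 + a e - a e g_i` or
`g_i - b e + b e g_i` on the right by `g_i⁻¹` again gives an element of the other shape, with the
coefficient updated affinely; iterating from `g_i⁻¹` itself produces the geometric sums. -/

/-- The Yokonuma–Hecke algebra data: a `ℂ`-algebra `A` together with elements
`g_0, …, g_{n-2}`, invertible elements `t_0, …, t_{n-1}` and the elements
`e_{d,i} = (1/d) ∑_{m=0}^{d-1} t_i^m t_{i+1}^{-m}`, satisfying the defining
relations of `Y_{d,n}(u)` (braid relations, commuting `t`'s of order dividing `d`,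
mixed relations `t_j g_i = g_i t_{s_i(j)}`, and the quadratic relations). -/
structure YokonumaHecke (A : Type*) [Ring A] [Algebra ℂ A] (d n : ℕ) (u : ℂ) where
  g : ℕ → A
  t : ℕ → Aˣ
  e : ℕ → A
  e_def : ∀ i, i + 1 < n →
    e i = (d : ℂ)⁻¹ • ∑ m ∈ Finset.range d, ((t i ^ m * (t (i + 1))⁻¹ ^ m : Aˣ) : A)
  braid_far : ∀ i j, i + 1 < j → j + 1 < n → g i * g j = g j * g i
  braid : ∀ i, i + 2 < n → g i * g (i + 1) * g i = g (i + 1) * g i * g (i + 1)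
  t_comm : ∀ i j, i < n → j < n → t i * t j = t j * t i
  t_ord : ∀ i, i < n → t i ^ d = 1
  mixed : ∀ i j, i + 1 < n → j < n →
    (t j : A) * g i = g i * ((t (if j = i then i + 1 else if j = i + 1 then i else j) : A))
  quad : ∀ i, i + 1 < n → g i ^ 2 = 1 + (u - 1) • e i - (u - 1) • (e i * g i)

open Finset

section GeomSum

variable {R : Type*} [Ring R]

theorem pow_mul_geom_sum_of_pow_eq_one {x : R} {d : ℕ} (hx : x ^ d = 1) (m : ℕ) :
    x ^ m * ∑ j ∈ range d, x ^ j = ∑ j ∈ range d, x ^ j := by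
  have hx_mul : x * ∑ j ∈ range d, x ^ j = ∑ j ∈ range d, x ^ j := by
    have := mul_geom_sum x d
    rwa [hx, sub_self, sub_mul, one_mul, sub_eq_zero] at this
  induction m with
  | zero => rw [pow_zero, one_mul]
  | succ m ih => rw [pow_succ, mul_assoc, hx_mul, ih]

theorem geom_sum_mul_self_of_pow_eq_one {x : R} {d : ℕ} (hx : x ^ d = 1) :
    (∑ j ∈ range d, x ^ j) * ∑ j ∈ range d, x ^ j = d • ∑ j ∈ range d, x ^ j := by
  rw [sum_mul, sum_congr rfl fun m _ => pow_mul_geom_sum_of_pow_eq_one hx m, sum_const,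
    card_range]

theorem isIdempotentElem_inv_smul_geom_sum {K : Type*} [Field K] [Algebra K R] {x : R} {d : ℕ}
    (hx : x ^ d = 1) (hd : (d : K) ≠ 0) :
    IsIdempotentElem ((d : K)⁻¹ • ∑ j ∈ range d, x ^ j) := by
  rw [IsIdempotentElem, smul_mul_smul, geom_sum_mul_self_of_pow_eq_one hx,
    ← Nat.cast_smul_eq_nsmul K, smul_smul, mul_assoc, inv_mul_cancel₀ hd, mul_one]

end GeomSum

theorem YokonumaHecke.isIdempotentElem_e {A : Type*} [Ring A] [Algebra ℂ A] {d n : ℕ} {u : ℂ}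
    (hd : 0 < d) (Y : YokonumaHecke A d n u) {i : ℕ} (hi : i + 1 < n) :
    IsIdempotentElem (Y.e i) := by
  have hcomm : Commute (Y.t i) (Y.t (i + 1))⁻¹ :=
    Commute.inv_right (Y.t_comm i (i + 1) (by omega) hi)
  set s : Aˣ := Y.t i * (Y.t (i + 1))⁻¹
  have hs : (s : A) ^ d = 1 := by
    rw [← Units.val_pow_eq_pow_val, hcomm.mul_pow, Y.t_ord i (by omega), inv_pow,
      Y.t_ord (i + 1) hi, inv_one, one_mul, Units.val_one]
  have he : Y.e i = (d : ℂ)⁻¹ • ∑ m ∈ range d, (s : A) ^ m := by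
    rw [Y.e_def i hi]
    congr 1
    exact sum_congr rfl fun m _ => by rw [← hcomm.mul_pow, Units.val_pow_eq_pow_val]
  rw [he]
  exact isIdempotentElem_inv_smul_geom_sum hs (Nat.cast_ne_zero.mpr hd.ne')

section InversePowers

/-! `h` plays the role of `G⁻¹` for a quadratic relation `G ^ 2 = 1 + (u - 1) E - (u - 1) E G`,
with `q = u⁻¹`. -/

variable {K A : Type*} [CommRing K] [Ring A] [Algebra K A] {E G h : A} {q : K}

theorem hecke_idem_mul_inv (hE : IsIdempotentElem E)
    (hh : h = G - (q - 1) • E + (q - 1) • (E * G)) :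
    E * h = q • (E * G) - (q - 1) • E := by
  rw [hh, mul_add, mul_sub, mul_smul_comm, mul_smul_comm, hE.eq, ← mul_assoc, hE.eq]
  module

theorem hecke_odd_mul_inv (hE : IsIdempotentElem E) (hGh : G * h = 1)
    (hh : h = G - (q - 1) • E + (q - 1) • (E * G)) (b : K) :
    (G - b • E + b • (E * G)) * h = 1 + (q * b) • E - (q * b) • (E * G) := by
  rw [add_mul, sub_mul, smul_mul_assoc, smul_mul_assoc, hGh, hecke_idem_mul_inv hE hh,
    mul_assoc, hGh, mul_one]
  module

theorem hecke_even_mul_inv (hE : IsIdempotentElem E) (hGh : G * h = 1)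
    (hh : h = G - (q - 1) • E + (q - 1) • (E * G)) (a : K) :
    (1 + a • E - a • (E * G)) * h
      = G - (q - 1 + q * a) • E + (q - 1 + q * a) • (E * G) := by
  rw [sub_mul, add_mul, smul_mul_assoc, smul_mul_assoc, one_mul, hecke_idem_mul_inv hE hh,
    mul_assoc, hGh, mul_one, hh]
  module

theorem hecke_inv_pow_odd (hE : IsIdempotentElem E) (hGh : G * h = 1)
    (hh : h = G - (q - 1) • E + (q - 1) • (E * G)) (k : ℕ) :
    h ^ (2 * k + 1) =
      G - ((q - 1) * ∑ l ∈ range (k + 1), q ^ (2 * l)) • E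
        + ((q - 1) * ∑ l ∈ range (k + 1), q ^ (2 * l)) • (E * G) := by
  induction k with
  | zero => simpa using hh
  | succ k ih =>
    have hsum : ∑ l ∈ range (k + 2), q ^ (2 * l)
        = q ^ 2 * ∑ l ∈ range (k + 1), q ^ (2 * l) + 1 := by
      simp only [pow_mul, geom_sum_succ]
    rw [show 2 * (k + 1) + 1 = 2 * k + 1 + 1 + 1 by ring, pow_succ, pow_succ, ih,
      hecke_odd_mul_inv hE hGh hh, hecke_even_mul_inv hE hGh hh, hsum]
    congr 3 <;> ring

theorem hecke_inv_pow_even (hE : IsIdempotentElem E) (hGh : G * h = 1)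
    (hh : h = G - (q - 1) • E + (q - 1) • (E * G)) (k : ℕ) :
    h ^ (2 * (k + 1)) =
      1 + (q * (q - 1) * ∑ l ∈ range (k + 1), q ^ (2 * l)) • E
        - (q * (q - 1) * ∑ l ∈ range (k + 1), q ^ (2 * l)) • (E * G) := by
  rw [mul_add_one, pow_succ, hecke_inv_pow_odd hE hGh hh, hecke_odd_mul_inv hE hGh hh,
    mul_assoc]

end InversePowers

theorem yokonuma_negative_powers_general {A : Type*} [Ring A] [Algebra ℂ A] {d n : ℕ} {u : ℂ}
    (hd : 0 < d) (Y : YokonumaHecke A d n u)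
    (i : ℕ) (hi : i + 1 < n) (h : A)
    (hform : h = Y.g i - (u⁻¹ - 1) • Y.e i + (u⁻¹ - 1) • (Y.e i * Y.g i))
    (hinv2 : Y.g i * h = 1) :
    ∀ k : ℕ, 1 ≤ k →
      (h ^ (2 * k) =
        1 + (u⁻¹ * (u⁻¹ - 1) * ∑ l ∈ Finset.range k, u⁻¹ ^ (2 * l)) • Y.e i
          - (u⁻¹ * (u⁻¹ - 1) * ∑ l ∈ Finset.range k, u⁻¹ ^ (2 * l)) • (Y.e i * Y.g i)) ∧
      (h ^ (2 * k - 1) =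
        Y.g i - ((u⁻¹ - 1) * ∑ l ∈ Finset.range k, u⁻¹ ^ (2 * l)) • Y.e i
          + ((u⁻¹ - 1) * ∑ l ∈ Finset.range k, u⁻¹ ^ (2 * l)) • (Y.e i * Y.g i)) := by
  intro k hk
  obtain ⟨k, rfl⟩ := Nat.exists_eq_add_of_le' hk
  have hE := Y.isIdempotentElem_e hd hi
  exact ⟨hecke_inv_pow_even hE hinv2 hform k, hecke_inv_pow_odd hE hinv2 hform k⟩

/-- In the Yokonuma–Hecke algebra `Y_{d,n}(u)`, for every negative even
integer `m = -2k` one has `g_i^m = 1 + α′_m e_{d,i} - α′_m e_{d,i} g_i` with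
`α′_m = u⁻¹(u⁻¹-1) ∑_{l=0}^{k-1} u^{-2l}`, and for `m = -2k+1` (`k ≥ 1`) one has
`g_i^m = g_i - β′_m e_{d,i} + β′_m e_{d,i} g_i` with `β′_m = (u⁻¹-1) ∑_{l=0}^{k-1} u^{-2l}`.
Here `g_i^{-1}` is represented by the two-sided inverse
`h = g_i - (u⁻¹-1) e_{d,i} + (u⁻¹-1) e_{d,i} g_i`, and `g_i^{-j} = h^j`. -/
theorem yokonuma_negative_powers {A : Type*} [Ring A] [Algebra ℂ A] {d n : ℕ} {u : ℂ}
    (hd : 0 < d) (hu0 : u ≠ 0) (hu1 : u ≠ 1) (Y : YokonumaHecke A d n u)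
    (i : ℕ) (hi : i + 1 < n) (h : A)
    (hform : h = Y.g i - (u⁻¹ - 1) • Y.e i + (u⁻¹ - 1) • (Y.e i * Y.g i))
    (hinv1 : h * Y.g i = 1) (hinv2 : Y.g i * h = 1) :
    ∀ k : ℕ, 1 ≤ k →
      (h ^ (2 * k) =
        1 + (u⁻¹ * (u⁻¹ - 1) * ∑ l ∈ Finset.range k, u⁻¹ ^ (2 * l)) • Y.e i
          - (u⁻¹ * (u⁻¹ - 1) * ∑ l ∈ Finset.range k, u⁻¹ ^ (2 * l)) • (Y.e i * Y.g i)) ∧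
      (h ^ (2 * k - 1) =
        Y.g i - ((u⁻¹ - 1) * ∑ l ∈ Finset.range k, u⁻¹ ^ (2 * l)) • Y.e i
          + ((u⁻¹ - 1) * ∑ l ∈ Finset.range k, u⁻¹ ^ (2 * l)) • (Y.e i * Y.g i)) :=
  yokonuma_negative_powers_general hd Y i hi h hform hinv2
end

section
/- Fix d ≥ 1 and a nonempty subset S of Z/dZ, and define x_k = (1/|S|) ∑_{s∈S} exp(2πisk/d) for 0 ≤ k ≤ d-1. Then x_0 = 1 and the x_k satisfy the E-system: for every m with 1 ≤ m ≤ d-1, E_d^{(m)} = x_m E_d^{(0)}, where E_d^{(m)} = ∑_{s=0}^{d-1} x_{m+s} x_{d-s} with indices taken mod d and x_0 = x_d = 1 by convention. -/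
/-- The solution of the E-system attached to a nonempty subset `S ⊆ ℤ/dℤ`:
`x_k = (1/|S|) ∑_{s ∈ S} exp(2πisk/d)`. -/
noncomputable def solE (d : ℕ) (S : Finset (ZMod d)) (k : ZMod d) : ℂ :=
  (S.card : ℂ)⁻¹ *
    ∑ s ∈ S, Complex.exp (2 * (Real.pi : ℂ) * Complex.I * (s.val : ℂ) * (k.val : ℂ) / (d : ℂ))

/-- The polynomial `E_d^{(m)} = ∑_{s=0}^{d-1} x_{m+s} x_{d-s}` (subscripts mod `d`),
evaluated at a family `x : ℤ/dℤ → ℂ`. -/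
noncomputable def Epoly (d : ℕ) (x : ZMod d → ℂ) (m : ZMod d) : ℂ :=
  ∑ s ∈ Finset.range d, x (m + (s : ZMod d)) * x (-(s : ZMod d))

/-!
Up to the factor `1/|S|`, `x` is the Fourier transform of the indicator of `S`, and
`E_d^{(m)} = ∑_k x_{m+k} x_{-k}` is the autocorrelation of `x` at `m`. By orthogonality of
characters the autocorrelation of a Fourier transform is `d` times the transform of the square of
the original function; since `1_S² = 1_S`, this gives `E_d^{(m)} = (d/|S|) x_m` for every `m`.
-/

open Finset

namespace AddChar

variable {R : Type*} [CommRing R] [Fintype R]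

noncomputable def finsetTransform (ψ : AddChar R ℂ) (S : Finset R) (k : R) : ℂ :=
  ∑ s ∈ S, ψ (s * k)

theorem sum_finsetTransform_add_mul_finsetTransform_neg [DecidableEq R] {ψ : AddChar R ℂ}
    (hψ : ψ.IsPrimitive) (S : Finset R) (m : R) :
    ∑ k, finsetTransform ψ S (m + k) * finsetTransform ψ S (-k) =
      Fintype.card R * finsetTransform ψ S m := by
  have hterm : ∀ s t k : R, ψ (s * (m + k)) * ψ (t * -k) = ψ (s * m) * ψ (k * (s - t)) :=
    fun s t k => by rw [← map_add_eq_mul, ← map_add_eq_mul]; ring_nf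
  calc ∑ k, finsetTransform ψ S (m + k) * finsetTransform ψ S (-k)
      = ∑ s ∈ S, ∑ t ∈ S, ψ (s * m) * ∑ k, ψ (k * (s - t)) := by
        simp_rw [finsetTransform, sum_mul_sum, hterm, mul_sum]
        rw [sum_comm]
        exact sum_congr rfl fun s _ => sum_comm
    _ = ∑ s ∈ S, ψ (s * m) * Fintype.card R := by
        refine sum_congr rfl fun s hs => ?_
        rw [sum_eq_single_of_mem s hs, sum_mulShift _ hψ, if_pos (sub_self s)]
        intro t _ hts
        rw [sum_mulShift _ hψ, if_neg (sub_ne_zero.mpr hts.symm), Nat.cast_zero, mul_zero]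
    _ = Fintype.card R * finsetTransform ψ S m := by
        rw [finsetTransform, mul_sum]
        exact sum_congr rfl fun s _ => mul_comm _ _

end AddChar

theorem sum_range_natCast_eq_sum_univ {M : Type*} [AddCommMonoid M] (d : ℕ) [NeZero d]
    (f : ZMod d → M) : ∑ i ∈ range d, f i = ∑ x : ZMod d, f x :=
  sum_nbij' (fun n => (n : ZMod d)) ZMod.val (fun _ _ => mem_univ _)
    (fun a _ => mem_range.mpr (ZMod.val_lt a))
    (fun _ ha => ZMod.val_natCast_of_lt (mem_range.mp ha))
    (fun a _ => ZMod.natCast_zmod_val a) (fun _ _ => rfl)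

theorem Epoly_eq_sum_univ (d : ℕ) [NeZero d] (x : ZMod d → ℂ) (m : ZMod d) :
    Epoly d x m = ∑ k : ZMod d, x (m + k) * x (-k) :=
  sum_range_natCast_eq_sum_univ d fun k => x (m + k) * x (-k)

theorem solE_eq_finsetTransform (d : ℕ) [NeZero d] (S : Finset (ZMod d)) (k : ZMod d) :
    solE d S k = (#S : ℂ)⁻¹ * AddChar.finsetTransform ZMod.stdAddChar S k := by
  refine congrArg _ (sum_congr rfl fun s _ => ?_)
  have hval : s * k = ((s.val * k.val : ℤ) : ZMod d) := by
    push_cast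
    simp only [ZMod.natCast_val, ZMod.cast_id', id]
  rw [hval, ZMod.stdAddChar_coe]
  push_cast
  ring_nf

theorem solE_zero (d : ℕ) {S : Finset (ZMod d)} (hS : S.Nonempty) : solE d S 0 = 1 := by
  have hcard : (#S : ℂ) ≠ 0 := Nat.cast_ne_zero.mpr hS.card_ne_zero
  simp [solE, hcard]

theorem Epoly_solE (d : ℕ) (S : Finset (ZMod d)) (m : ZMod d) :
    Epoly d (solE d S) m = d * (#S : ℂ)⁻¹ * solE d S m := by
  rcases eq_or_ne d 0 with rfl | hd
  · simp [Epoly]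
  have : NeZero d := ⟨hd⟩
  simp only [Epoly_eq_sum_univ, solE_eq_finsetTransform, mul_mul_mul_comm _ _ (#S : ℂ)⁻¹,
    ← mul_sum, AddChar.sum_finsetTransform_add_mul_finsetTransform_neg
      (ZMod.isPrimitive_stdAddChar d), ZMod.card]
  ring

theorem solE_solves_E_system_general (d : ℕ) (S : Finset (ZMod d)) (hS : S.Nonempty) :
    solE d S 0 = 1 ∧
    ∀ m : ZMod d, m ≠ 0 → Epoly d (solE d S) m = solE d S m * Epoly d (solE d S) 0 := by
  refine ⟨solE_zero d hS, fun m _ => ?_⟩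
  rw [Epoly_solE, Epoly_solE, solE_zero d hS]
  ring

/-- Fix `d ≥ 1` and a nonempty subset `S` of `ℤ/dℤ`, and define
`x_k = (1/|S|) ∑_{s∈S} exp(2πisk/d)`. Then `x_0 = 1` and the `x_k` satisfy the
E-system: for every `m` with `1 ≤ m ≤ d-1` (i.e. every nonzero `m ∈ ℤ/dℤ`),
`E_d^{(m)} = x_m E_d^{(0)}`. -/
theorem solE_solves_E_system (d : ℕ) (hd : 1 ≤ d) (S : Finset (ZMod d)) (hS : S.Nonempty) :
    solE d S 0 = 1 ∧
    ∀ m : ZMod d, m ≠ 0 → Epoly d (solE d S) m = solE d S m * Epoly d (solE d S) 0 :=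
  solE_solves_E_system_general d S hS
end

section
/- Every solution (x_1,...,x_{d-1}) ∈ C^{d-1} of the E-system is of the form x_k = (1/|S|) ∑_{s∈S} exp(2πisk/d) for some nonempty subset S ⊆ Z/dZ, and distinct nonempty subsets S give distinct solutions; thus the solutions of the E-system are parametrized by nonempty subsets of Z/dZ. -/
/-!
The E-system says that the autocorrelation `m ↦ ∑ₛ x (m + s) x (-s)` of `x` equals `c • x`,
where `c = E_d^{(0)}` (at `m = 0` this is the convention `x 0 = 1`). The discrete Fourier
transform turns autocorrelation into squaring, so `(𝓕 x)² = c • 𝓕 x` and `𝓕 x` takes only the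
values `0` and `c`. Evaluating `𝓕 (𝓕 x)` at `0` gives `|S| c = d` for the support `S` of `𝓕 x`,
so `S` is nonempty and `𝓕 x = (d / |S|) • 1_S`; Fourier inversion then gives `x = solE d S`.
Conversely `𝓕 (solE d S) = (d / |S|) • 1_S` has support `S`, so `S` is determined by `x`.
-/

open Finset ZMod

namespace ESystem

variable {N : ℕ} [NeZero N]

lemma sum_range_natCast {M : Type*} [AddCommMonoid M] (f : ZMod N → M) :
    ∑ i ∈ range N, f i = ∑ a, f a :=
  sum_nbij' (↑) ZMod.val (fun _ _ => mem_univ _) (fun a _ => mem_range.2 a.val_lt)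
    (fun _ hi => val_cast_of_lt (mem_range.1 hi)) (fun a _ => natCast_zmod_val a) (fun _ _ => rfl)

noncomputable def autocorr (Φ : ZMod N → ℂ) (m : ZMod N) : ℂ :=
  ∑ s, Φ (m + s) * Φ (-s)

lemma Epoly_eq_autocorr (Φ : ZMod N → ℂ) : Epoly N Φ = autocorr Φ :=
  funext fun m => sum_range_natCast fun s => Φ (m + s) * Φ (-s)

lemma dft_autocorr (Φ : ZMod N → ℂ) (j : ZMod N) : 𝓕 (autocorr Φ) j = 𝓕 Φ j ^ 2 := by
  have hshift (s : ZMod N) : ∑ m, stdAddChar (-(m * j)) * Φ (m + s) =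
      stdAddChar (s * j) * 𝓕 Φ j := by
    rw [dft_apply, mul_sum]
    refine Fintype.sum_equiv (Equiv.addRight s) _ _ fun m => ?_
    rw [Equiv.coe_addRight, smul_eq_mul, ← mul_assoc, ← AddChar.map_add_eq_mul]
    ring_nf
  calc 𝓕 (autocorr Φ) j
      = ∑ s, Φ (-s) * ∑ m, stdAddChar (-(m * j)) * Φ (m + s) := by
        simp only [dft_apply, autocorr, smul_eq_mul, mul_sum]
        rw [sum_comm]
        exact sum_congr rfl fun s _ => sum_congr rfl fun m _ => by ring
    _ = (∑ s, stdAddChar (-(-s * j)) * Φ (-s)) * 𝓕 Φ j := by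
        simp only [hshift, sum_mul, neg_mul, neg_neg]
        exact sum_congr rfl fun s _ => by ring
    _ = 𝓕 Φ j ^ 2 := by
        rw [sq, Fintype.sum_equiv (Equiv.neg _) (fun s => stdAddChar (-(-s * j)) * Φ (-s))
          (fun s => stdAddChar (-(s * j)) • Φ s) (fun s => by simp), ← dft_apply]

lemma stdAddChar_mul_eq_exp (s k : ZMod N) :
    stdAddChar (s * k) =
      Complex.exp (2 * (Real.pi : ℂ) * Complex.I * (s.val : ℂ) * (k.val : ℂ) / (N : ℂ)) := by
  have : s * k = ((s.val * k.val : ℕ) : ZMod N) := by simp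
  rw [this, stdAddChar_apply, toCircle_natCast]
  push_cast
  ring_nf

lemma solE_eq_invDFT (S : Finset (ZMod N)) :
    solE N S = 𝓕⁻ fun j => if j ∈ S then (N : ℂ) / S.card else 0 := by
  ext k
  have hN : (N : ℂ) ≠ 0 := NeZero.ne _
  simp only [solE, invDFT_apply, smul_eq_mul, mul_ite, mul_zero, sum_ite_mem, univ_inter,
    ← sum_mul, stdAddChar_mul_eq_exp]
  generalize (∑ s ∈ S, _ : ℂ) = e
  field_simp

lemma dft_solE (S : Finset (ZMod N)) :
    𝓕 (solE N S) = fun j => if j ∈ S then (N : ℂ) / S.card else 0 := by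
  rw [solE_eq_invDFT, LinearEquiv.apply_symm_apply]

lemma mem_iff_dft_solE_ne_zero {S : Finset (ZMod N)} (hS : S.Nonempty) (j : ZMod N) :
    j ∈ S ↔ 𝓕 (solE N S) j ≠ 0 := by
  rw [dft_solE]
  by_cases hj : j ∈ S <;> simp [hj, NeZero.ne N, hS.card_pos.ne']

lemma solE_injective {S T : Finset (ZMod N)} (hS : S.Nonempty) (hT : T.Nonempty)
    (h : solE N S = solE N T) : S = T := by
  ext j
  rw [mem_iff_dft_solE_ne_zero hS, mem_iff_dft_solE_ne_zero hT, h]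

lemma dft_eq_zero_or_eq_of_autocorr_eq_smul {x : ZMod N → ℂ} {c : ℂ} (h : autocorr x = c • x)
    (j : ZMod N) : 𝓕 x j = 0 ∨ 𝓕 x j = c := by
  have hsq : 𝓕 x j * (𝓕 x j - c) = 0 := by
    rw [mul_sub, ← sq, ← dft_autocorr, h, _root_.map_smul, Pi.smul_apply, smul_eq_mul,
      mul_comm, sub_self]
  simpa [sub_eq_zero] using hsq

lemma exists_eq_solE_of_dft_eq_zero_or_eq {x : ZMod N → ℂ} {c : ℂ} (hx0 : x 0 = 1)
    (hF : ∀ j, 𝓕 x j = 0 ∨ 𝓕 x j = c) : ∃ S : Finset (ZMod N), S.Nonempty ∧ x = solE N S := by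
  classical
  have hN : (N : ℂ) ≠ 0 := NeZero.ne _
  set S := univ.filter fun j => 𝓕 x j ≠ 0
  have hxS : 𝓕 x = fun j => if j ∈ S then c else 0 := by
    ext j
    rcases hF j with hj | hj <;> by_cases hjS : j ∈ S <;> simp_all [S]
  have hcard : (S.card : ℂ) * c = N := by
    have h0 := congrFun (dft_dft x) 0
    rw [dft_apply_zero, hxS] at h0
    simpa [hx0, sum_ite_mem] using h0
  have hS : S.Nonempty := by
    rw [nonempty_iff_ne_empty]
    rintro hS
    simp [hS, eq_comm, hN] at hcard
  have hc : c = N / S.card := by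
    rw [← hcard, mul_div_cancel_left₀ _ (Nat.cast_ne_zero.2 hS.card_pos.ne')]
  refine ⟨S, hS, ?_⟩
  rw [solE_eq_invDFT, ← hc, ← hxS, LinearEquiv.symm_apply_apply]

end ESystem

open ESystem in
/-- Gérardin: Every solution `(x_1, …, x_{d-1})` of the E-system
(with the convention `x_0 = 1`) is of the form `x_k = (1/|S|) ∑_{s∈S} exp(2πisk/d)`
for some nonempty subset `S ⊆ ℤ/dℤ`, and distinct nonempty subsets give distinct
solutions; thus the solutions of the E-system are parametrized by the nonempty
subsets of `ℤ/dℤ`. -/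
theorem E_system_solutions_parametrized (d : ℕ) (hd : 0 < d)
    (x : ZMod d → ℂ) (hx0 : x 0 = 1)
    (hsol : ∀ m : ZMod d, m ≠ 0 → Epoly d x m = x m * Epoly d x 0) :
    ∃! S : Finset (ZMod d), S.Nonempty ∧ ∀ k : ZMod d, x k = solE d S k := by
  have : NeZero d := ⟨hd.ne'⟩
  have hcorr : autocorr x = Epoly d x 0 • x := by
    ext m
    rcases eq_or_ne m 0 with rfl | hm
    · rw [Pi.smul_apply, hx0, smul_eq_mul, mul_one, Epoly_eq_autocorr]
    · rw [Pi.smul_apply, smul_eq_mul, mul_comm, ← hsol m hm, Epoly_eq_autocorr]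
  obtain ⟨S, hS, rfl⟩ :=
    exists_eq_solE_of_dft_eq_zero_or_eq hx0 (dft_eq_zero_or_eq_of_autocorr_eq_smul hcorr)
  exact ⟨S, ⟨hS, fun _ => rfl⟩, fun T ⟨hT, hST⟩ => solE_injective hT hS (funext hST).symm⟩
end

section
/- Let d | d', let S ⊆ Z/dZ be nonempty, and let S' = S_{d'}^d = { s(a) + b : a ∈ S, b ∈ ker ϑ_d^{d'} } for a section s of the reduction ϑ_d^{d'}. If x_k = (1/|S|)∑_{s∈S} exp(2πisk/d) solves the (E,d)-system, then x'_j = (1/|S'|)∑_{t∈S'} exp(2πitj/d') solves the (E,d')-system, and moreover for all j ∈ Z/d'Z, (1/|S'|)∑_{t∈S'} exp(2πitj/d') equals (1/|S|)∑_{a∈S} exp(2πia(j/(d'/d))/d) if (d'/d) | j, and equals 0 otherwise. -/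
/-- The lifting `S_{d'}^d = { s(a) + b : a ∈ S, b ∈ ker ϑ_d^{d'} } ⊆ ℤ/d'ℤ` of a subset
`S ⊆ ℤ/dℤ` along a section `s` of the reduction map `ϑ_d^{d'} : ℤ/d'ℤ → ℤ/dℤ`. -/
def liftSet (d d' : ℕ) [NeZero d'] (h : d ∣ d') (s : ZMod d → ZMod d')
    (S : Finset (ZMod d)) : Finset (ZMod d') :=
  Finset.image (fun p : ZMod d × ZMod d' => s p.1 + p.2)
    (S ×ˢ Finset.univ.filter (fun b : ZMod d' => ZMod.castHom h (ZMod d) b = 0))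



open Complex Finset

/-! ### Auxiliary lemmas -/

lemma exp_nat_two_pi (k : ℕ) : Complex.exp ((k:ℂ) * (2 * (Real.pi:ℂ) * Complex.I)) = 1 := by
  have h := Complex.exp_int_mul_two_pi_mul_I (k:ℤ)
  push_cast at h; exact h

lemma exp_nat_mul' (z : ℂ) (n : ℕ) : Complex.exp ((n:ℂ) * z) = Complex.exp z ^ n := by
  exact_mod_cast Complex.exp_int_mul z n

/-- The additive character `a ↦ exp(2πi·a·j/n)`. -/
noncomputable def chi (n : ℕ) (j a : ℕ) : ℂ :=
  Complex.exp (2 * (Real.pi : ℂ) * Complex.I * (a : ℂ) * (j : ℂ) / (n : ℂ))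

lemma chi_mod (n : ℕ) [NeZero n] (j a : ℕ) : chi n j (a % n) = chi n j a := by
  conv_rhs => rw [show a = n * (a / n) + a % n from (Nat.div_add_mod a n).symm.trans (by ring)]
  have hn : (n : ℂ) ≠ 0 := Nat.cast_ne_zero.mpr (NeZero.ne n)
  unfold chi
  rw [show 2 * (Real.pi : ℂ) * Complex.I * ((n * (a / n) + a % n : ℕ) : ℂ) * (j : ℂ) / (n : ℂ)
      = ((a / n * j : ℕ) : ℂ) * (2 * (Real.pi:ℂ) * Complex.I)
        + 2 * (Real.pi:ℂ) * Complex.I * ((a % n : ℕ) : ℂ) * (j:ℂ) / n by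
        push_cast; field_simp]
  rw [Complex.exp_add, exp_nat_two_pi, one_mul]

lemma chi_congr (n : ℕ) [NeZero n] (j : ℕ) {a b : ℕ} (hab : a % n = b % n) :
    chi n j a = chi n j b := by
  rw [← chi_mod n j a, hab, chi_mod]

lemma chi_add_arg (n : ℕ) [NeZero n] (j a b : ℕ) : chi n j (a + b) = chi n j a * chi n j b := by
  have hn : (n : ℂ) ≠ 0 := Nat.cast_ne_zero.mpr (NeZero.ne n)
  unfold chi
  rw [← Complex.exp_add]
  congr 1
  push_cast
  field_simp

lemma chi_zmod_add (n : ℕ) [NeZero n] (j : ℕ) (t u : ZMod n) :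
    chi n j (t + u).val = chi n j t.val * chi n j u.val := by
  rw [ZMod.val_add, chi_mod, chi_add_arg]

lemma ker_filter_eq (d d' : ℕ) [NeZero d] [NeZero d'] (h : d ∣ d') :
    Finset.univ.filter (fun b : ZMod d' => ZMod.castHom h (ZMod d) b = 0)
      = (Finset.range (d'/d)).image (fun c : ℕ => ((d*c : ℕ) : ZMod d')) := by
  ext b
  simp only [Finset.mem_filter, Finset.mem_univ, true_and, Finset.mem_image, Finset.mem_range]
  constructor
  · intro hb
    have hb0 : ((b.val : ℕ) : ZMod d) = 0 := by
      rw [ZMod.natCast_val, ← ZMod.castHom_apply (h := h)]; exact hb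
    have hb' : d ∣ b.val := (ZMod.natCast_eq_zero_iff _ _).mp hb0
    obtain ⟨c, hc⟩ := hb'
    have hlt : b.val < d' := b.val_lt
    have hdd : d * (d'/d) = d' := Nat.mul_div_cancel' h
    have hd0 : 0 < d := Nat.pos_of_ne_zero (NeZero.ne d)
    refine ⟨c, by nlinarith [hc ▸ hlt], ?_⟩
    rw [← hc, ZMod.natCast_val, ZMod.cast_id]
  · rintro ⟨c, hc, rfl⟩
    rw [Nat.cast_mul, map_mul, map_natCast, ZMod.natCast_self, zero_mul]

lemma sum_range_mul_eq (e d : ℕ) (he : 0 < e) (g : ℕ → ℂ)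
    (hg : ∀ s, s < e*d → ¬ e ∣ s → g s = 0) :
    ∑ s ∈ Finset.range (e*d), g s = ∑ t ∈ Finset.range d, g (e*t) := by
  have hinj : ∀ x ∈ Finset.range d, ∀ y ∈ Finset.range d, e*x = e*y → x = y := by
    intro x _ y _ hxy; exact Nat.eq_of_mul_eq_mul_left he hxy
  calc ∑ s ∈ Finset.range (e*d), g s
      = ∑ s ∈ (Finset.range d).image (fun t => e*t), g s := by
        refine (Finset.sum_subset ?_ ?_).symm
        · intro x hx
          simp only [Finset.mem_image, Finset.mem_range] at hx ⊢
          obtain ⟨t, ht, rfl⟩ := hx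
          exact Nat.mul_lt_mul_left he |>.mpr ht
        · intro x hx hnx
          simp only [Finset.mem_range] at hx
          refine hg x hx ?_
          rintro ⟨t, rfl⟩
          exact hnx (Finset.mem_image.mpr ⟨t, Finset.mem_range.mpr
            (lt_of_mul_lt_mul_left hx (Nat.zero_le e)), rfl⟩)
    _ = ∑ t ∈ Finset.range d, g (e*t) := Finset.sum_image hinj

/-- The descended family on `ZMod d'` attached to `x : ZMod d → ℂ`. -/
noncomputable def liftF (d d' : ℕ) [NeZero d'] (x : ZMod d → ℂ) (j : ZMod d') : ℂ :=
  if (d' / d) ∣ j.val then x ((j.val / (d' / d) : ℕ) : ZMod d) else 0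

lemma liftF_eq (d d' : ℕ) [NeZero d] [NeZero d'] (h : d ∣ d') (x : ZMod d → ℂ)
    (j : ZMod d') (w : ℕ) (hw : j.val = (d'/d) * w) :
    liftF d d' x j = x ((w : ℕ) : ZMod d) := by
  have he0 : 0 < d'/d :=
    Nat.div_pos (Nat.le_of_dvd (Nat.pos_of_ne_zero (NeZero.ne d')) h)
      (Nat.pos_of_ne_zero (NeZero.ne d))
  unfold liftF
  rw [if_pos ⟨w, hw⟩, hw, Nat.mul_div_cancel_left w he0]

lemma liftF_eq_zero (d d' : ℕ) [NeZero d'] (x : ZMod d → ℂ) (j : ZMod d')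
    (hw : ¬ (d'/d) ∣ j.val) : liftF d d' x j = 0 := if_neg hw

lemma EpolyB (d d' : ℕ) [NeZero d] [NeZero d'] (h : d ∣ d') (x : ZMod d → ℂ)
    (m : ZMod d') (hm : ¬ (d'/d) ∣ m.val) : Epoly d' (liftF d d' x) m = 0 := by
  have hE : (d'/d) ∣ d' := Nat.div_dvd_of_dvd h
  unfold Epoly
  apply Finset.sum_eq_zero
  intro t _
  by_cases h1 : (d'/d) ∣ (m + (t : ZMod d')).val
  · by_cases h2 : (d'/d) ∣ (-(t : ZMod d')).val
    · exfalso
      apply hm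
      have hm2 : m = (m + (t : ZMod d')) + (-(t : ZMod d')) := by ring
      have hval : m.val = ((m + (t : ZMod d')).val + (-(t : ZMod d')).val) % d' := by
        conv_lhs => rw [hm2]
        rw [ZMod.val_add]
      rw [hval, Nat.dvd_mod_iff hE]
      exact Nat.dvd_add h1 h2
    · rw [liftF_eq_zero d d' x _ h2, mul_zero]
  · rw [liftF_eq_zero d d' x _ h1, zero_mul]

lemma EpolyA (d d' : ℕ) [NeZero d] [NeZero d'] (h : d ∣ d') (x : ZMod d → ℂ)
    (m : ZMod d') (q : ℕ) (hm : m.val = (d'/d) * q) :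
    Epoly d' (liftF d d' x) m = Epoly d x ((q : ℕ) : ZMod d) := by
  set e := d'/d with hedef
  have hd0 : 0 < d := Nat.pos_of_ne_zero (NeZero.ne d)
  have he0 : 0 < e := Nat.div_pos (Nat.le_of_dvd (Nat.pos_of_ne_zero (NeZero.ne d')) h) hd0
  have hed : e * d = d' := by rw [hedef, Nat.div_mul_cancel h]
  have hqd : q < d := by
    have h1 : e * q < e * d := by rw [← hm, hed]; exact m.val_lt
    exact Nat.lt_of_mul_lt_mul_left h1
  unfold Epoly
  rw [show Finset.range d' = Finset.range (e*d) by rw [hed]]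
  have hvan : ∀ s0, s0 < e*d → ¬ e ∣ s0 →
      liftF d d' x (m + (s0 : ZMod d')) * liftF d d' x (-(s0 : ZMod d')) = 0 := by
    intro s0 hs0 hns
    have hv : ¬ (d'/d) ∣ ((-(s0 : ZMod d')) : ZMod d').val := by
      rw [← hedef]
      intro hdvd
      apply hns
      have hsv : ((s0 : ZMod d')).val = s0 := ZMod.val_cast_of_lt (by rw [← hed]; exact hs0)
      have h0 : (((s0 : ZMod d') + -(s0 : ZMod d')).val) = 0 := by
        rw [add_neg_cancel]; exact ZMod.val_zero
      rw [ZMod.val_add, hsv] at h0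
      have hd'd : d' ∣ (s0 + (-(s0 : ZMod d')).val) := Nat.dvd_of_mod_eq_zero h0
      have hEd : e ∣ d' := ⟨d, hed.symm⟩
      have h3 : e ∣ s0 + (-(s0 : ZMod d')).val := hEd.trans hd'd
      have h4 := Nat.dvd_sub h3 hdvd
      simpa using h4
    rw [liftF_eq_zero d d' x _ hv, mul_zero]
  rw [sum_range_mul_eq e d he0 (fun s0 => liftF d d' x (m + (s0 : ZMod d')) *
      liftF d d' x (-(s0 : ZMod d'))) hvan]
  apply Finset.sum_congr rfl
  intro t ht
  rw [Finset.mem_range] at ht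
  have hF1 : liftF d d' x (m + ((e*t : ℕ) : ZMod d')) = x ((q : ZMod d) + (t : ZMod d)) := by
    have hlt : e*t < d' := by rw [← hed]; exact Nat.mul_lt_mul_left he0 |>.mpr ht
    have hval : (m + ((e*t : ℕ) : ZMod d')).val = e * ((q+t) % d) := by
      rw [ZMod.val_add, ZMod.val_natCast, Nat.mod_eq_of_lt hlt, hm, ← Nat.mul_add, ← hed,
        Nat.mul_mod_mul_left]
    rw [liftF_eq d d' h x _ ((q+t) % d) (by rw [← hedef]; exact hval)]
    rw [ZMod.natCast_mod, Nat.cast_add]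
  have hF2 : liftF d d' x (-((e*t : ℕ) : ZMod d')) = x (-(t : ZMod d)) := by
    have hwd : (d - t) % d < d := Nat.mod_lt _ hd0
    have hneg : (-(((e*t : ℕ)) : ZMod d')) = ((e*((d-t) % d) : ℕ) : ZMod d') := by
      have hadd : (((e*t : ℕ)) : ZMod d') + ((e*((d-t) % d) : ℕ) : ZMod d') = 0 := by
        rw [← Nat.cast_add]
        by_cases ht0 : t = 0
        · subst ht0; simp
        · have h1 : (d-t) % d = d-t := Nat.mod_eq_of_lt (by omega)
          rw [h1, show e*t + e*(d-t) = d' from by rw [← hed, ← Nat.mul_add]; congr 1; omega]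
          exact ZMod.natCast_self d'
      exact neg_eq_of_add_eq_zero_right hadd
    rw [hneg]
    have hval : (((e*((d-t) % d) : ℕ)) : ZMod d').val = e * ((d-t) % d) :=
      ZMod.val_cast_of_lt (by rw [← hed]; exact Nat.mul_lt_mul_left he0 |>.mpr hwd)
    rw [liftF_eq d d' h x _ ((d-t) % d) (by rw [← hedef]; exact hval)]
    rw [ZMod.natCast_mod, Nat.cast_sub (le_of_lt ht), ZMod.natCast_self, zero_sub]
  rw [hF1, hF2]

lemma solE_lift (d d' : ℕ) [NeZero d] [NeZero d'] (h : d ∣ d') (s : ZMod d → ZMod d')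
    (hs : ∀ a, ZMod.castHom h (ZMod d) (s a) = a) (S : Finset (ZMod d)) (hS : S.Nonempty) :
    ∀ j : ZMod d', solE d' (liftSet d d' h s S) j = liftF d d' (solE d S) j := by
  intro j
  set e := d'/d with hedef
  have hd0 : 0 < d := Nat.pos_of_ne_zero (NeZero.ne d)
  have he0 : 0 < e := Nat.div_pos (Nat.le_of_dvd (Nat.pos_of_ne_zero (NeZero.ne d')) h) hd0
  have hed : e * d = d' := by rw [hedef, Nat.div_mul_cancel h]
  have hde' : d * e = d' := by rw [mul_comm]; exact hed
  have heC : (e : ℂ) ≠ 0 := Nat.cast_ne_zero.mpr he0.ne'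
  have hdC : (d : ℂ) ≠ 0 := Nat.cast_ne_zero.mpr hd0.ne'
  have hSC : (S.card : ℂ) ≠ 0 := Nat.cast_ne_zero.mpr (Finset.card_ne_zero.mpr hS)
  set K := Finset.univ.filter (fun b : ZMod d' => ZMod.castHom h (ZMod d) b = 0) with hKdef
  have hker : K = (Finset.range e).image (fun c : ℕ => ((d*c : ℕ) : ZMod d')) := by
    rw [hKdef, ← hedef] at *
    exact (hedef ▸ ker_filter_eq d d' h)
  -- injectivity of the natural parametrisation of the kernel
  have hinjN : ∀ c1 ∈ Finset.range e, ∀ c2 ∈ Finset.range e,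
      ((d*c1 : ℕ) : ZMod d') = ((d*c2 : ℕ) : ZMod d') → c1 = c2 := by
    intro c1 hc1 c2 hc2 hcc
    rw [Finset.mem_range] at hc1 hc2
    have v1 : ((d*c1 : ℕ) : ZMod d').val = d*c1 :=
      ZMod.val_cast_of_lt (by rw [← hde']; exact Nat.mul_lt_mul_left hd0 |>.mpr hc1)
    have v2 : ((d*c2 : ℕ) : ZMod d').val = d*c2 :=
      ZMod.val_cast_of_lt (by rw [← hde']; exact Nat.mul_lt_mul_left hd0 |>.mpr hc2)
    have := congrArg ZMod.val hcc
    rw [v1, v2] at this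
    exact Nat.eq_of_mul_eq_mul_left hd0 this
  have hcardK : K.card = e := by
    rw [hker, Finset.card_image_of_injOn (fun c1 hc1 c2 hc2 hcc =>
      hinjN c1 (Finset.mem_coe.mp hc1) c2 (Finset.mem_coe.mp hc2) hcc), Finset.card_range]
  -- injectivity of the lifting map
  have hinjP : ∀ p ∈ S ×ˢ K, ∀ p' ∈ S ×ˢ K,
      (fun p : ZMod d × ZMod d' => s p.1 + p.2) p = (fun p : ZMod d × ZMod d' => s p.1 + p.2) p'
        → p = p' := by
    intro p hp p' hp' hpq
    simp only [Finset.mem_product, hKdef, Finset.mem_filter, Finset.mem_univ, true_and]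
      at hp hp'
    simp only at hpq
    have h1 : p.1 = p'.1 := by
      have hcc := congrArg (ZMod.castHom h (ZMod d)) hpq
      rw [map_add, map_add, hs, hs, hp.2, hp'.2, add_zero, add_zero] at hcc
      exact hcc
    have h2 : p.2 = p'.2 := by rw [h1] at hpq; exact add_left_cancel hpq
    exact Prod.ext h1 h2
  have hcards : (liftSet d d' h s S).card = S.card * e := by
    rw [liftSet, ← hKdef, Finset.card_image_of_injOn (fun p hp p' hp' hpq =>
      hinjP p (Finset.mem_coe.mp hp) p' (Finset.mem_coe.mp hp') hpq),
      Finset.card_product, hcardK]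
  have hsum : ∀ f : ZMod d' → ℂ,
      (∑ t ∈ liftSet d d' h s S, f t) = ∑ a ∈ S, ∑ b ∈ K, f (s a + b) := by
    intro f
    rw [liftSet, ← hKdef, Finset.sum_image hinjP, Finset.sum_product]
  have step1 : solE d' (liftSet d d' h s S) j
      = ((S.card * e : ℕ) : ℂ)⁻¹ *
          ∑ a ∈ S, (chi d' j.val (s a).val * ∑ b ∈ K, chi d' j.val b.val) := by
    unfold solE
    rw [hcards]
    congr 1
    rw [show (∑ t ∈ liftSet d d' h s S,
        Complex.exp (2 * (Real.pi:ℂ) * Complex.I * (t.val : ℂ) * (j.val : ℂ) / (d' : ℂ)))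
        = ∑ t ∈ liftSet d d' h s S, chi d' j.val t.val from rfl]
    rw [hsum (fun t => chi d' j.val t.val)]
    refine Finset.sum_congr rfl (fun a _ => ?_)
    rw [Finset.mul_sum]
    exact Finset.sum_congr rfl (fun b _ => chi_zmod_add d' j.val (s a) b)
  have hchiK : ∑ b ∈ K, chi d' j.val b.val
      = ∑ c ∈ Finset.range e,
          (Complex.exp (2 * (Real.pi:ℂ) * Complex.I * (j.val : ℂ) / (e : ℂ)))^c := by
    rw [hker, Finset.sum_image hinjN]
    refine Finset.sum_congr rfl (fun c hc => ?_)
    rw [Finset.mem_range] at hc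
    have hlt : d*c < d' := by rw [← hde']; exact Nat.mul_lt_mul_left hd0 |>.mpr hc
    rw [ZMod.val_cast_of_lt hlt, ← exp_nat_mul']
    unfold chi
    congr 1
    have hdC' : (d' : ℂ) = (d : ℂ) * (e : ℂ) := by exact_mod_cast hde'.symm
    rw [hdC']
    push_cast
    field_simp
  by_cases hc : e ∣ j.val
  · obtain ⟨q, hq⟩ := hc
    have hqd : q < d := by
      have h1 : e * q < e * d := by rw [← hq, hed]; exact j.val_lt
      exact Nat.lt_of_mul_lt_mul_left h1
    have hjq : ((j.val : ℕ) : ℂ) = (e : ℂ) * (q : ℂ) := by exact_mod_cast hq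
    have hdC' : (d' : ℂ) = (d : ℂ) * (e : ℂ) := by exact_mod_cast hde'.symm
    have hω : Complex.exp (2 * (Real.pi:ℂ) * Complex.I * (j.val : ℂ) / (e : ℂ)) = 1 := by
      rw [hjq, show 2 * (Real.pi:ℂ) * Complex.I * ((e:ℂ) * (q:ℂ)) / (e:ℂ)
        = (q:ℂ) * (2 * (Real.pi:ℂ) * Complex.I) from by field_simp]
      exact exp_nat_two_pi q
    have hsK : ∑ b ∈ K, chi d' j.val b.val = (e : ℂ) := by
      rw [hchiK]
      simp only [hω, one_pow, Finset.sum_const, Finset.card_range, nsmul_eq_mul, mul_one]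
    have hre : ∀ a ∈ S, chi d' j.val (s a).val * ∑ b ∈ K, chi d' j.val b.val
        = chi d q a.val * (e : ℂ) := by
      intro a _
      rw [hsK]
      congr 1
      have hmid : chi d' j.val (s a).val = chi d q ((s a).val) := by
        unfold chi
        congr 1
        rw [hjq, hdC']
        field_simp
      rw [hmid]
      apply chi_congr
      have hv : (((s a).val : ℕ) : ZMod d) = a := by
        rw [ZMod.natCast_val, ← ZMod.castHom_apply (h := h)]; exact hs a
      have hva : (s a).val % d = a.val := by
        have h5 := congrArg ZMod.val hv
        rwa [ZMod.val_natCast] at h5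
      rw [hva]
      exact (Nat.mod_eq_of_lt a.val_lt).symm
    rw [step1, Finset.sum_congr rfl hre,
      liftF_eq d d' h (solE d S) j q (by rw [← hedef]; exact hq)]
    unfold solE chi
    rw [ZMod.val_cast_of_lt hqd, ← Finset.sum_mul]
    push_cast
    field_simp
    ring_nf
    exact Finset.sum_congr rfl (fun x _ => by ring_nf)
  · rw [step1, liftF_eq_zero d d' (solE d S) j (by rw [← hedef]; exact hc)]
    have hsK : ∑ b ∈ K, chi d' j.val b.val = 0 := by
      rw [hchiK]
      set ω := Complex.exp (2 * (Real.pi:ℂ) * Complex.I * (j.val : ℂ) / (e : ℂ)) with hω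
      have hωe : ω ^ e = 1 := by
        rw [← exp_nat_mul', show (e:ℂ) * (2 * (Real.pi:ℂ) * Complex.I * (j.val : ℂ) / (e : ℂ))
          = (j.val : ℂ) * (2 * (Real.pi:ℂ) * Complex.I) from by field_simp]
        exact exp_nat_two_pi _
      have hω1 : ω ≠ 1 := by
        intro h1
        obtain ⟨n, hn⟩ := Complex.exp_eq_one_iff.mp h1
        rw [div_eq_iff heC] at hn
        have h2 : 2 * (Real.pi:ℂ) * Complex.I * ((j.val : ℕ) : ℂ)
            = 2 * (Real.pi:ℂ) * Complex.I * ((n : ℂ) * (e : ℂ)) := by linear_combination hn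
        have h3 : ((j.val : ℕ) : ℂ) = (n : ℂ) * (e : ℂ) :=
          mul_left_cancel₀ Complex.two_pi_I_ne_zero h2
        have h4 : (j.val : ℤ) = n * e := by exact_mod_cast h3
        exact hc (Int.natCast_dvd_natCast.mp ⟨n, by rw [h4, mul_comm]⟩)
      rw [geom_sum_eq hω1, hωe]
      simp
    simp [hsK]

/-- Let `d ∣ d'`, let `S ⊆ ℤ/dℤ` be nonempty, and let
`S' = S_{d'}^d = { s(a) + b : a ∈ S, b ∈ ker ϑ_d^{d'} }` for a section `s` of the
reduction `ϑ_d^{d'}`. If `x_k = (1/|S|)∑_{s∈S} exp(2πisk/d)` solves the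
`(E,d)`-system, then `x'_j = (1/|S'|)∑_{t∈S'} exp(2πitj/d')` solves the
`(E,d')`-system; moreover for all `j ∈ ℤ/d'ℤ`, `x'_j` equals
`(1/|S|)∑_{a∈S} exp(2πia(j/(d'/d))/d)` if `(d'/d) ∣ j`, and equals `0` otherwise. -/
theorem liftSet_solution (d d' : ℕ) [NeZero d] [NeZero d'] (h : d ∣ d')
    (s : ZMod d → ZMod d') (hs : ∀ a, ZMod.castHom h (ZMod d) (s a) = a)
    (S : Finset (ZMod d)) (hS : S.Nonempty)
    (hsol : ∀ m : ZMod d, m ≠ 0 →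
      Epoly d (solE d S) m = solE d S m * Epoly d (solE d S) 0) :
    (∀ m : ZMod d', m ≠ 0 →
      Epoly d' (solE d' (liftSet d d' h s S)) m =
        solE d' (liftSet d d' h s S) m * Epoly d' (solE d' (liftSet d d' h s S)) 0) ∧
    (∀ j : ZMod d',
      solE d' (liftSet d d' h s S) j =
        if (d' / d) ∣ j.val then solE d S ((j.val / (d' / d) : ℕ) : ZMod d) else 0) := by
  have hkey := solE_lift d d' h s hs S hS
  have hfun : solE d' (liftSet d d' h s S) = liftF d d' (solE d S) := funext hkey
  have hd0 : 0 < d := Nat.pos_of_ne_zero (NeZero.ne d)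
  have he0 : 0 < d'/d := Nat.div_pos (Nat.le_of_dvd (Nat.pos_of_ne_zero (NeZero.ne d')) h) hd0
  have hed : (d'/d) * d = d' := Nat.div_mul_cancel h
  constructor
  · intro m hm
    rw [hfun]
    by_cases hdvd : (d'/d) ∣ m.val
    · obtain ⟨q, hq⟩ := hdvd
      have hE0 : Epoly d' (liftF d d' (solE d S)) 0 = Epoly d (solE d S) 0 := by
        have := EpolyA d d' h (solE d S) 0 0 (by simp)
        rwa [Nat.cast_zero] at this
      have hq0 : q ≠ 0 := by
        rintro rfl
        rw [Nat.mul_zero] at hq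
        exact hm ((ZMod.val_eq_zero m).mp hq)
      have hqd : q < d := by
        have h1 : (d'/d) * q < (d'/d) * d := by rw [← hq, hed]; exact m.val_lt
        exact Nat.lt_of_mul_lt_mul_left h1
      have hcast : ((q : ℕ) : ZMod d) ≠ 0 := by
        intro h0
        apply hq0
        have h1 := ZMod.val_cast_of_lt hqd
        rw [h0, ZMod.val_zero] at h1
        exact h1.symm
      rw [EpolyA d d' h (solE d S) m q hq, hE0, hsol _ hcast,
        liftF_eq d d' h (solE d S) m q hq]
    · rw [EpolyB d d' h (solE d S) m hdvd, liftF_eq_zero d d' (solE d S) m hdvd, zero_mul]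
  · intro j
    rw [hkey j, liftF]
end

section
/- Suppose tr_d is a linear functional on Y_{d,n+1}(u) satisfying the Markov trace rules (trace property, tr_d(1)=1, tr_d(a g_n) = z tr_d(a) and tr_d(a t_{n+1}^m) = x_m tr_d(a) for a ∈ Y_{d,n}), where the parameters x_m come from a solution X_{d,S} of the E-system. Then for all a ∈ Y_{d,n}: tr_d(a e_{d,n} g_n) = z tr_d(a) and tr_d(a g_n^{-1}) = (1/u)(z + (u-1)/|S|) tr_d(a). -/
open Finset

theorem Units.val_inv_mem_of_pow_eq_one {M S : Type*} [Monoid M] [SetLike S M]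
    [SubmonoidClass S M] {B : S} {t : Mˣ} {d : ℕ} (hd : d ≠ 0) (htd : t ^ d = 1)
    (htB : (t : M) ∈ B) : ((t⁻¹ : Mˣ) : M) ∈ B := by
  have htd' : (t : M) ^ d = 1 := by rw [← Units.val_pow_eq_pow_val, htd, Units.val_one]
  rw [Units.inv_eq_of_mul_eq_one_left (by rw [pow_sub_one_mul hd, htd'])]
  exact pow_mem htB _

section TraceProperty

variable {A R : Type*} [Monoid A] {tr : A → R} (htr_comm : ∀ a b : A, tr (a * b) = tr (b * a))
include htr_comm

theorem trace_units_conj (w : Aˣ) (a : A) : tr (↑w⁻¹ * a * ↑w) = tr a := by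
  rw [htr_comm, ← mul_assoc, Units.mul_inv, one_mul]

theorem trace_mul_mul_mul_of_semiconjBy {S : Type*} [SetLike S A] [SubmonoidClass S A]
    [Mul R] {B : S} {g : A} {z : R} (htr_g : ∀ a ∈ B, tr (a * g) = z * tr a)
    {w v : Aˣ} (hwB : (w : A) ∈ B) (hwB' : ((w⁻¹ : Aˣ) : A) ∈ B)
    (hgw : SemiconjBy g ↑w⁻¹ ↑v) {a : A} (ha : a ∈ B) :
    tr (a * w * v * g) = z * tr a := by
  have hconj : ↑w⁻¹ * a * ↑w ∈ B := mul_mem (mul_mem hwB' ha) hwB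
  calc tr (a * w * v * g) = tr (↑w⁻¹ * (a * w * g)) := by
        rw [mul_assoc _ (v : A), ← hgw.eq, ← mul_assoc, htr_comm]
    _ = z * tr a := by
        rw [← mul_assoc, ← mul_assoc, htr_g _ hconj, trace_units_conj htr_comm]

end TraceProperty

theorem LinearMap.map_mul_average_smul_sum_mul {K A ι : Type*} [Field K] [Semiring A]
    [Algebra K A] (tr : A →ₗ[K] K) (s : Finset ι) (hs : (#s : K) ≠ 0) (f : ι → A) (a g : A)
    {c : K} (h : ∀ i ∈ s, tr (a * f i * g) = c) :
    tr (a * ((#s : K)⁻¹ • ∑ i ∈ s, f i) * g) = c := by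
  rw [mul_smul_comm, smul_mul_assoc, map_smul, mul_sum, sum_mul, map_sum, sum_congr rfl h,
    sum_const, nsmul_eq_mul, smul_eq_mul, inv_mul_cancel_left₀ hs]

theorem markov_trace_mul_e_mul_g {K A S : Type*} [Field K] [Semiring A] [Algebra K A]
    [SetLike S A] [SubmonoidClass S A] (B : S) (d : ℕ) (hd : (d : K) ≠ 0) (z : K) (tr : A →ₗ[K] K) (g e : A)
    (t t' : Aˣ) (htB : (t : A) ∈ B) (htd : t ^ d = 1) (hmix : (t' : A) * g = g * (t : A))
    (he : e = (d : K)⁻¹ • ∑ m ∈ range d, ((t ^ m * t'⁻¹ ^ m : Aˣ) : A))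
    (htr_comm : ∀ a b : A, tr (a * b) = tr (b * a))
    (htr_g : ∀ a ∈ B, tr (a * g) = z * tr a) {a : A} (ha : a ∈ B) :
    tr (a * e * g) = z * tr a := by
  have htB' : ((t⁻¹ : Aˣ) : A) ∈ B :=
    Units.val_inv_mem_of_pow_eq_one (by rintro rfl; simp at hd) htd htB
  have hgt : SemiconjBy g t t' := hmix.symm
  have hterm : ∀ m ∈ range d, tr (a * ((t ^ m * t'⁻¹ ^ m : Aˣ) : A) * g) = z * tr a := by
    intro m _
    rw [Units.val_mul, ← mul_assoc]
    refine trace_mul_mul_mul_of_semiconjBy htr_comm htr_g ?_ ?_ ?_ ha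
    · rw [Units.val_pow_eq_pow_val]; exact pow_mem htB m
    · rw [← inv_pow t, Units.val_pow_eq_pow_val]; exact pow_mem htB' m
    · rw [inv_pow t']
      refine SemiconjBy.units_inv_right ?_
      rw [Units.val_pow_eq_pow_val, Units.val_pow_eq_pow_val]; exact hgt.pow_right m
  have havg := tr.map_mul_average_smul_sum_mul (range d) (by rwa [card_range]) _ a g hterm
  rwa [card_range, ← he] at havg

theorem markov_trace_mul_g_inv {K A : Type*} [Field K] [Ring A] [Algebra K A]
    (tr : A →ₗ[K] K) (g ginv e a : A) {u z s : K} (hu : u ≠ 0)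
    (hginv : ginv = g - (u⁻¹ - 1) • e + (u⁻¹ - 1) • (e * g))
    (hg : tr (a * g) = z * tr a) (he : tr (a * e) = s * tr a) (heg : tr (a * e * g) = z * tr a) :
    tr (a * ginv) = u⁻¹ * (z + (u - 1) * s) * tr a := by
  rw [hginv, mul_add, mul_sub, mul_smul_comm, mul_smul_comm, map_add, map_sub, map_smul,
    map_smul, smul_eq_mul, smul_eq_mul, hg, he, ← mul_assoc a e g, heg]
  linear_combination (-s * tr a) * inv_mul_cancel₀ hu

theorem markov_trace_negative_stabilization_general
    {A : Type*} [Ring A] [Algebra ℂ A] (B : Subalgebra ℂ A)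
    (d : ℕ) (hd : 0 < d) (u z : ℂ) (hu0 : u ≠ 0)
    (S : Finset (ZMod d))
    (tr : A →ₗ[ℂ] ℂ) (g ginv e : A) (t t' : Aˣ)
    (htB : (t : A) ∈ B)
    (htd : t ^ d = 1)
    (hmix2 : (t' : A) * g = g * (t : A))
    (he : e = (d : ℂ)⁻¹ • ∑ m ∈ Finset.range d, ((t ^ m * t'⁻¹ ^ m : Aˣ) : A))
    (hginv : ginv = g - (u⁻¹ - 1) • e + (u⁻¹ - 1) • (e * g))
    (htr_comm : ∀ a b : A, tr (a * b) = tr (b * a))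
    (htr_g : ∀ a ∈ B, tr (a * g) = z * tr a)
    (htr_e : ∀ a ∈ B, tr (a * e) = (S.card : ℂ)⁻¹ * tr a) :
    ∀ a ∈ B,
      tr (a * e * g) = z * tr a ∧
      tr (a * ginv) = u⁻¹ * (z + (u - 1) * (S.card : ℂ)⁻¹) * tr a := by
  intro a ha
  have heg := markov_trace_mul_e_mul_g B d (Nat.cast_ne_zero.mpr hd.ne') z tr g e t t' htB htd
    hmix2 he htr_comm htr_g ha
  exact ⟨heg, markov_trace_mul_g_inv tr g ginv e a hu0 hginv (htr_g a ha) (htr_e a ha) heg⟩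

/-- Suppose `tr` is a linear functional on (an algebra modelling)
`Y_{d,n+1}(u)` satisfying the Markov trace rules — trace property, `tr 1 = 1`,
`tr(a g_n) = z·tr a` and `tr(a t_{n+1}^m) = x_m·tr a` for `a ∈ Y_{d,n}` (the
subalgebra `B`) — where the parameters `x_m` come from the solution `X_{d,S}` of the
E-system, and assume the E-condition factorization `tr(a e_{d,n}) = tr(a)/|S|`.
Here `t = t_n`, `t' = t_{n+1}`, `g = g_n`, `e = e_{d,n}` and `ginv = g_n⁻¹` satisfy
the relevant defining relations of the Yokonuma–Hecke algebra. Then for all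
`a ∈ Y_{d,n}`:  `tr(a e_{d,n} g_n) = z·tr a` and
`tr(a g_n⁻¹) = (1/u)(z + (u-1)/|S|)·tr a`. -/
theorem markov_trace_negative_stabilization
    {A : Type*} [Ring A] [Algebra ℂ A] (B : Subalgebra ℂ A)
    (d : ℕ) (hd : 0 < d) (u z : ℂ) (hu0 : u ≠ 0) (hu1 : u ≠ 1)
    (S : Finset (ZMod d)) (hS : S.Nonempty)
    (x : ZMod d → ℂ) (hx : ∀ k, x k = solE d S k)
    (tr : A →ₗ[ℂ] ℂ) (g ginv e : A) (t t' : Aˣ)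
    (htB : (t : A) ∈ B)
    (htt' : t * t' = t' * t) (htd : t ^ d = 1) (ht'd : t' ^ d = 1)
    (hmix1 : (t : A) * g = g * (t' : A)) (hmix2 : (t' : A) * g = g * (t : A))
    (he : e = (d : ℂ)⁻¹ • ∑ m ∈ Finset.range d, ((t ^ m * t'⁻¹ ^ m : Aˣ) : A))
    (hginv : ginv = g - (u⁻¹ - 1) • e + (u⁻¹ - 1) • (e * g))
    (hginv1 : g * ginv = 1) (hginv2 : ginv * g = 1)
    (htr_comm : ∀ a b : A, tr (a * b) = tr (b * a))
    (htr_one : tr 1 = 1)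
    (htr_g : ∀ a ∈ B, tr (a * g) = z * tr a)
    (htr_t : ∀ a ∈ B, ∀ m : ℕ, tr (a * ((t' ^ m : Aˣ) : A)) = x (m : ZMod d) * tr a)
    (htr_e : ∀ a ∈ B, tr (a * e) = (S.card : ℂ)⁻¹ * tr a) :
    ∀ a ∈ B,
      tr (a * e * g) = z * tr a ∧
      tr (a * ginv) = u⁻¹ * (z + (u - 1) * (S.card : ℂ)⁻¹) * tr a :=
  markov_trace_negative_stabilization_general B d hd u z hu0 S tr g ginv e t t' htB htd hmix2 he
    hginv htr_comm htr_g htr_e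
end

section
/- Assume an invariant Δ of braid closures is defined by Δ(closure of α) = D^{n-1} (√λ)^{ε(α)} tr_d(♭(α)) for α ∈ B_n, where ♭ : B_n → Y_{d,n}(u) sends σ_i to g_i, ε is the exponent sum, and tr_d satisfies the Markov trace rules with E-condition parameters. Then Δ satisfies the cubic skein relation √λ · Δ(L_-) = (1/(λu)) Δ(L_{++}) + (1/√λ) Δ(L_+) - (1/u) Δ(L_0), where for β ∈ B_n, L_0 = closure(β), L_+ = closure(βσ_i), L_{++} = closure(βσ_i^2), L_- = closure(βσ_i^{-1}). -/
/-!
Multiplying the cubic relation on the left by `♭(β)` and applying the linear trace gives a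
linear relation between the four traces; the coefficients of the skein relation are exactly
the ones that cancel the different powers of `√λ` coming from the exponent sums.
-/

theorem LinearMap.map_mul_eq_of_eq_smul_sq_add {R A M : Type*} [CommRing R] [Ring A]
    [Algebra R A] [AddCommGroup M] [Module R M] (tr : A →ₗ[R] M) (b : A) {g ginv : A} {c : R}
    (h : ginv = c • g ^ 2 + g - c • (1 : A)) :
    tr (b * ginv) = c • tr (b * g ^ 2) + tr (b * g) - c • tr b := by
  rw [h, mul_sub, mul_add, mul_smul_comm, mul_smul_comm, mul_one, map_sub, map_add, map_smul,
    map_smul]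

theorem cubic_skein_relation_general {A : Type*} [Ring A] [Algebra ℂ A]
    (u lam sqlam D : ℂ)
    (hsq : sqlam ^ 2 = lam) (hlam0 : lam ≠ 0)
    (n : ℕ) (ε : ℤ)
    (tr : A →ₗ[ℂ] ℂ) (b g ginv : A)
    (hcubic : ginv = u⁻¹ • g ^ 2 + g - u⁻¹ • (1 : A))
    (ΔL0 ΔLp ΔLpp ΔLm : ℂ)
    (hΔL0 : ΔL0 = D ^ (n - 1) * sqlam ^ ε * tr b)
    (hΔLp : ΔLp = D ^ (n - 1) * sqlam ^ (ε + 1) * tr (b * g))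
    (hΔLpp : ΔLpp = D ^ (n - 1) * sqlam ^ (ε + 2) * tr (b * g ^ 2))
    (hΔLm : ΔLm = D ^ (n - 1) * sqlam ^ (ε - 1) * tr (b * ginv)) :
    sqlam * ΔLm = (1 / (lam * u)) * ΔLpp + (1 / sqlam) * ΔLp - (1 / u) * ΔL0 := by
  have hsqlam : sqlam ≠ 0 := by
    rintro rfl
    exact hlam0 (by simp [← hsq])
  subst hΔL0 hΔLp hΔLpp hΔLm hsq
  rw [tr.map_mul_eq_of_eq_smul_sq_add b hcubic, zpow_add₀ hsqlam, zpow_add₀ hsqlam,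
    zpow_sub₀ hsqlam]
  simp only [smul_eq_mul, zpow_ofNat]
  field_simp

/-- Assume an invariant `Δ` of braid closures is given on the closures of
`β`, `βσᵢ`, `βσᵢ²`, `βσᵢ⁻¹` (for `β ∈ Bₙ` with exponent sum `ε`) by
`Δ = D^{n-1} (√λ)^{ε(·)} tr_d(♭(·))`, where `♭(β) = b`, `♭(σᵢ) = gᵢ`, `tr_d` is the
`ℂ`-linear Markov trace on `Y_{d,n}(u)`, and the generators satisfy the cubic relation
`gᵢ⁻¹ = u⁻¹ gᵢ² + gᵢ - u⁻¹`. Then `Δ` satisfies the cubic skein relation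
`√λ Δ(L₋) = (1/(λu)) Δ(L₊₊) + (1/√λ) Δ(L₊) - (1/u) Δ(L₀)`. -/
theorem cubic_skein_relation {A : Type*} [Ring A] [Algebra ℂ A]
    (u z lam sqlam D : ℂ) (hu0 : u ≠ 0) (hu1 : u ≠ 1)
    (hsq : sqlam ^ 2 = lam) (hlam0 : lam ≠ 0)
    (n : ℕ) (ε : ℤ)
    (tr : A →ₗ[ℂ] ℂ) (b g ginv : A)
    (hcubic : ginv = u⁻¹ • g ^ 2 + g - u⁻¹ • (1 : A))
    (hginv1 : g * ginv = 1) (hginv2 : ginv * g = 1)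
    (ΔL0 ΔLp ΔLpp ΔLm : ℂ)
    (hΔL0 : ΔL0 = D ^ (n - 1) * sqlam ^ ε * tr b)
    (hΔLp : ΔLp = D ^ (n - 1) * sqlam ^ (ε + 1) * tr (b * g))
    (hΔLpp : ΔLpp = D ^ (n - 1) * sqlam ^ (ε + 2) * tr (b * g ^ 2))
    (hΔLm : ΔLm = D ^ (n - 1) * sqlam ^ (ε - 1) * tr (b * ginv)) :
    sqlam * ΔLm = (1 / (lam * u)) * ΔLpp + (1 / sqlam) * ΔLp - (1 / u) * ΔL0 :=
  cubic_skein_relation_general u lam sqlam D hsq hlam0 n ε tr b g ginv hcubic ΔL0 ΔLp ΔLpp ΔLm hΔL0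
    hΔLp hΔLpp hΔLm
end
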